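/- arXiv:1406.2052 — 2 statements merged into one kernel-verified Lean document; each statement's English description precedes it below -/
import Mathlib

section
/- Let P be a convex polytope in ℝ^D with vertices in ℤ^D, let n ∈ ℕ, let r > 0, and fix a fringe set F_r ⊆ B_r(nP) such that exactly l points of B_r(nP) are absent from F_r. Let k ∈ M_r(nP−nP). Then among all subsets S ⊆ L(nP) satisfying S ∩ B_r(nP) = F_r, the proportion of those with k ∉ S−S is at most (3/4)^{|L(nP ∩ (nP − k))|/2 − l}. -/
open scoped Pointwise

noncomputable section

/-- Points of `ℝ^D` with the Euclidean metric. -/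
abbrev Pt (D : ℕ) := EuclideanSpace ℝ (Fin D)

/-- `L(S)`: the set of lattice points of `S`, i.e. points of `S` all of whose
coordinates are integers. -/
def latticePts {D : ℕ} (S : Set (Pt D)) : Set (Pt D) :=
  {x | x ∈ S ∧ ∀ i, ∃ z : ℤ, x i = (z : ℝ)}

/-- A convex polytope: the convex hull of a finite set of points. -/
def IsPolytope {D : ℕ} (P : Set (Pt D)) : Prop :=
  ∃ V : Set (Pt D), V.Finite ∧ P = convexHull ℝ V

/-- A convex polytope whose vertices (extreme points) all lie in `ℤ^D`. -/
def IsLatticePolytope {D : ℕ} (P : Set (Pt D)) : Prop :=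
  IsPolytope P ∧ ∀ v ∈ Set.extremePoints ℝ P, ∀ i, ∃ z : ℤ, v i = (z : ℝ)

/-- `u` and `v` are strictly antipodal vertices of `Q`: there are parallel supporting
hyperplanes `H₁, H₂` of `Q` (with common normal functional `f`) such that
`H₁ ∩ Q = {u}` and `H₂ ∩ Q = {v}`. -/
def StrictlyAntipodal {D : ℕ} (Q : Set (Pt D)) (u v : Pt D) : Prop :=
  ∃ f : Pt D →ₗ[ℝ] ℝ, f ≠ 0 ∧
    {x | x ∈ Q ∧ ∀ y ∈ Q, f y ≤ f x} = {u} ∧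
    {x | x ∈ Q ∧ ∀ y ∈ Q, f x ≤ f y} = {v}

/-- The supporting cone of `Q` at `v`: `v + ⋃_{λ ≥ 0} λ (Q - v)`. -/
def suppCone {D : ℕ} (Q : Set (Pt D)) (v : Pt D) : Set (Pt D) :=
  {v} + ⋃ (l : ℝ) (_ : 0 ≤ l), l • (Q - ({v} : Set (Pt D)))

/-- `Q` is locally point symmetric: its vertices can be partitioned into pairs
(given by a fixed-point-free involution `σ` of the vertex set) of strictly antipodal
vertices such that each pair `{u, v}` satisfies `C(u) - u = v - C(v)`. -/
def LocallyPointSymmetric {D : ℕ} (Q : Set (Pt D)) : Prop :=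
  ∃ σ : Pt D → Pt D, ∀ v ∈ Set.extremePoints ℝ Q,
    σ v ∈ Set.extremePoints ℝ Q ∧ σ v ≠ v ∧ σ (σ v) = v ∧
    StrictlyAntipodal Q v (σ v) ∧
    suppCone Q v - ({v} : Set (Pt D)) = ({σ v} : Set (Pt D)) - suppCone Q (σ v)

/-- `E` is an edge of `Q`: a 1-dimensional face, i.e. the intersection of `Q` with a
supporting hyperplane which is 1-dimensional. -/
def IsEdge {D : ℕ} (Q E : Set (Pt D)) : Prop :=
  (∃ f : Pt D →ₗ[ℝ] ℝ, f ≠ 0 ∧ E = {x | x ∈ Q ∧ ∀ y ∈ Q, f y ≤ f x}) ∧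
    Module.finrank ℝ (affineSpan ℝ E).direction = 1

/-- `B_r(Q)`: lattice points of `Q` within distance `r` of some vertex of `Q`. -/
def ballFringe {D : ℕ} (Q : Set (Pt D)) (r : ℝ) : Set (Pt D) :=
  {q | q ∈ latticePts Q ∧ ∃ v ∈ Set.extremePoints ℝ Q, dist q v ≤ r}

/-- `M_r(Q) = L(Q) \ B_r(Q)`: the middle lattice points of `Q`. -/
def middlePts {D : ℕ} (Q : Set (Pt D)) (r : ℝ) : Set (Pt D) :=
  latticePts Q \ ballFringe Q r

/-- `P` is point symmetric: `P = x - P` for some point `x`. -/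
def PointSymmetric {D : ℕ} (P : Set (Pt D)) : Prop :=
  ∃ x : Pt D, P = ({x} : Set (Pt D)) - P

/-!
Put `L = L(nP)`, `B = B_r(nP)` and `M = L \ B`. A set `S ⊆ L` with `S ∩ B = F` is determined
by `S ∩ M`, which is arbitrary, so there are `2^|M|` such sets. The points `x` with
`x, x + k ∈ L` are exactly `X = L(nP ∩ (nP - k))`, as `k` is a lattice point. For `k ≠ 0` the
graph `x ~ x + k` on `X` is a union of paths (`k` has infinite order), so some `A ⊆ X` with
`|X| ≤ 2|A|` has pairwise disjoint pairs `{a, a + k}` (for `k = 0` take `A = X`). At most `l`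
of these pairs meet `B \ F`; every other pair minus `F` is a set of at most two points of `M`
that `S ∩ M` must not contain when `k ∉ S - S`. Forbidding a set of at most two points keeps at
most `3/4` of the subsets of `M`, independently for disjoint sets, which gives the factor
`(3/4)^(|X|/2 - l)`.
-/

open Finset

section Counting
variable {ι α : Type*} [DecidableEq α]

theorem Finset.card_filter_not_disjoint_le {f : ι → Finset α} {A : Finset ι}
    (hA : (A : Set ι).PairwiseDisjoint f) (T : Finset α) :
    #{a ∈ A | ¬ Disjoint (f a) T} ≤ #T := by
  refine (card_le_card_biUnion (f := fun a => f a ∩ T) ?_ fun a ha => ?_).trans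
    (card_le_card (biUnion_subset.2 fun _ _ => inter_subset_right))
  · exact (hA.subset (filter_subset _ _)).mono fun a => inter_subset_left
  · exact not_disjoint_iff_nonempty_inter.1 (mem_filter.1 ha).2

theorem Finset.card_filter_forall_not_subset_mul_four_pow_le (C : ι → Finset α) (I : Finset ι)
    (M : Finset α) (hCM : ∀ i ∈ I, C i ⊆ M) (hC : ∀ i ∈ I, #(C i) ≤ 2)
    (hdisj : (I : Set ι).PairwiseDisjoint C) :
    #{t ∈ M.powerset | ∀ i ∈ I, ¬ C i ⊆ t} * 4 ^ #I ≤ 3 ^ #I * 2 ^ #M := by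
  classical
  induction I using Finset.induction_on generalizing M with
  | empty => simp
  | @insert j I hj ih =>
    rw [coe_insert, Set.pairwiseDisjoint_insert] at hdisj
    have hCjM : C j ⊆ M := hCM j (mem_insert_self j I)
    have hCIM : ∀ i ∈ I, C i ⊆ M \ C j := fun i hi =>
      subset_sdiff.2 ⟨hCM i (mem_insert_of_mem hi),
        (hdisj.2 i hi (ne_of_mem_of_not_mem hi hj).symm).symm⟩
    have hcover : {t ∈ M.powerset | ∀ i ∈ insert j I, ¬ C i ⊆ t} ⊆
        ((C j).powerset.erase (C j) ×ˢ {t ∈ (M \ C j).powerset | ∀ i ∈ I, ¬ C i ⊆ t}).image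
          fun p => p.1 ∪ p.2 := by
      intro t ht
      simp only [mem_filter, mem_powerset, mem_insert, forall_eq_or_imp] at ht
      refine mem_image.2 ⟨(t ∩ C j, t \ C j), ?_, sup_inf_sdiff t (C j)⟩
      simp only [mem_product, mem_erase, mem_filter, mem_powerset]
      refine ⟨⟨fun h => ht.2.1 (h ▸ inter_subset_left), inter_subset_right⟩,
        sdiff_subset_sdiff ht.1 le_rfl, fun i hi hsub => ht.2.2 i hi (hsub.trans sdiff_subset)⟩
    have hsmall : (2 ^ #(C j) - 1) * 4 ≤ 3 * 2 ^ #(C j) := by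
      have := hC j (mem_insert_self j I)
      interval_cases #(C j) <;> omega
    calc #{t ∈ M.powerset | ∀ i ∈ insert j I, ¬ C i ⊆ t} * 4 ^ #(insert j I)
        ≤ (2 ^ #(C j) - 1) * #{t ∈ (M \ C j).powerset | ∀ i ∈ I, ¬ C i ⊆ t} * 4 ^ (#I + 1) := by
          rw [card_insert_of_notMem hj]
          gcongr
          refine (card_le_card hcover).trans (card_image_le.trans ?_)
          rw [card_product, card_erase_of_mem (mem_powerset_self _), card_powerset]
      _ = (2 ^ #(C j) - 1) * 4 * (#{t ∈ (M \ C j).powerset | ∀ i ∈ I, ¬ C i ⊆ t} * 4 ^ #I) := by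
          ring
      _ ≤ 3 * 2 ^ #(C j) * (3 ^ #I * 2 ^ #(M \ C j)) :=
          Nat.mul_le_mul hsmall
            (ih (M \ C j) hCIM (fun i hi => hC i (mem_insert_of_mem hi)) hdisj.1)
      _ = 3 ^ #(insert j I) * 2 ^ #M := by
          rw [card_insert_of_notMem hj, card_sdiff_of_subset hCjM, pow_succ,
            ← Nat.add_sub_cancel' (card_le_card hCjM), pow_add, Nat.add_sub_cancel_left]
          ring

theorem Finset.card_powerset_filter_inter_eq {L B F : Finset α} (hBL : B ⊆ L) (hFB : F ⊆ B) :
    #{S ∈ L.powerset | S ∩ B = F} = 2 ^ #(L \ B) := by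
  rw [← card_powerset]
  refine card_nbij' (· \ B) (F ∪ ·) ?_ ?_ ?_ ?_
  all_goals intro S hS
  all_goals simp only [mem_coe, mem_filter, mem_powerset] at hS ⊢
  all_goals grind

end Counting

theorem Finset.ncard_setOf_subset_and {α : Type*} (L : Finset α) (p : Set α → Prop)
    [DecidablePred fun t : Finset α => p ↑t] :
    {S : Set α | S ⊆ L ∧ p S}.ncard = #(L.powerset.filter fun t : Finset α => p t) := by
  have : {S : Set α | S ⊆ L ∧ p S} =
      (↑) '' (↑(L.powerset.filter fun t : Finset α => p t) : Set (Finset α)) := by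
    ext S
    constructor
    · rintro ⟨hS, hp⟩
      obtain ⟨t, rfl⟩ := (L.finite_toSet.subset hS).exists_finset_coe
      exact ⟨t, by simpa using ⟨hS, hp⟩, rfl⟩
    · rintro ⟨t, ht, rfl⟩
      simpa using ht
  rw [this, Set.ncard_image_of_injective _ coe_injective, Set.ncard_coe_finset]

section AddGroup
variable {G : Type*} [AddCommGroup G] [DecidableEq G]

theorem Finset.exists_mem_sub_notMem [IsAddTorsionFree G] {X : Finset G} (hX : X.Nonempty)
    {k : G} (hk : k ≠ 0) : ∃ x ∈ X, x - k ∉ X := by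
  by_contra! h
  obtain ⟨x, hx⟩ := hX
  have hmem : ∀ n : ℕ, x - n • k ∈ X := by
    intro n
    induction n with
    | zero => simpa using hx
    | succ n ih => rw [succ_nsmul, sub_add_eq_sub_sub]; exact h _ ih
  exact ((infinite_range_add_nsmul_iff x (-k)).2 (neg_ne_zero.2 hk)) <|
    X.finite_toSet.subset <| Set.range_subset_iff.2 fun n => by
      simpa [sub_eq_add_neg] using hmem n

theorem Finset.exists_subset_pairwiseDisjoint_pair_add [IsAddTorsionFree G] (X : Finset G)
    (k : G) :
    ∃ A ⊆ X, #X ≤ 2 * #A ∧ (A : Set G).PairwiseDisjoint fun a => ({a, a + k} : Finset G) := by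
  rcases eq_or_ne k 0 with rfl | hk
  · refine ⟨X, subset_rfl, by omega, fun a _ b _ hab => ?_⟩
    simpa using hab
  induction X using Finset.strongInduction with
  | H X ih =>
    rcases X.eq_empty_or_nonempty with rfl | hX
    · exact ⟨∅, subset_rfl, by simp, by simp⟩
    -- As `x - k ∉ X`, no pair `{a, a + k}` with `a ∈ X` other than `{x, x + k}` contains `x`.
    obtain ⟨x, hx, hxk⟩ := exists_mem_sub_notMem hX hk
    obtain ⟨A, hAX, hcard, hA⟩ :=
      ih (X \ {x, x + k}) ((ssubset_iff_of_subset sdiff_subset).2 ⟨x, hx, by simp⟩)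
    refine ⟨insert x A, insert_subset hx (hAX.trans sdiff_subset), ?_, ?_⟩
    · have := card_le_two (a := x) (b := x + k)
      have := card_le_card_sdiff_add_card (s := X) (t := {x, x + k})
      rw [card_insert_of_notMem fun h => by simpa using hAX h]
      omega
    · rw [coe_insert]
      refine hA.insert fun a ha hne => ?_
      have ha' := hAX ha
      simp only [mem_sdiff, mem_insert, mem_singleton, not_or] at ha'
      simp only [disjoint_insert_left, disjoint_insert_right, mem_insert, mem_singleton,
        disjoint_singleton, not_or]
      exact ⟨ha'.2, fun h => hxk (by rw [h, add_sub_cancel_right]; exact ha'.1),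
        fun h => hne (add_right_cancel h)⟩

theorem Finset.card_powerset_filter_sub_notMem_le_card_filter (L B F I : Finset G) (k : G) :
    #{S ∈ L.powerset | S ∩ B = F ∧ k ∉ S - S} ≤
      #{t ∈ (L \ B).powerset | ∀ a ∈ I, ¬ {a, a + k} \ F ⊆ t} := by
  refine card_le_card_of_injOn (· \ B) (fun S hS => ?_) (fun S hS S' hS' h => ?_)
  · simp only [mem_coe, mem_filter, mem_powerset] at hS ⊢
    obtain ⟨hSL, hSB, hkS⟩ := hS
    have hFS : F ⊆ S := hSB ▸ inter_subset_left
    refine ⟨sdiff_subset_sdiff hSL le_rfl, fun a _ hsub => hkS ?_⟩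
    have hpair : {a, a + k} ⊆ S := fun y hy => by
      by_cases hyF : y ∈ F
      · exact hFS hyF
      · exact sdiff_subset (hsub (mem_sdiff.2 ⟨hy, hyF⟩))
    simpa using sub_mem_sub (hpair (by simp) : a + k ∈ S) (hpair (by simp) : a ∈ S)
  · simp only [mem_coe, mem_filter, mem_powerset] at hS hS' h
    rw [← sdiff_union_inter S B, ← sdiff_union_inter S' B, h, hS.2.1, hS'.2.1]

theorem Finset.card_powerset_filter_sub_notMem_le [IsAddTorsionFree G] (L B F : Finset G)
    (k : G) :
    (#{S ∈ L.powerset | S ∩ B = F ∧ k ∉ S - S} : ℝ) ≤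
      (3 / 4 : ℝ) ^ ((#{x ∈ L | x + k ∈ L} : ℝ) / 2 - #(B \ F)) * 2 ^ #(L \ B) := by
  obtain ⟨A, hAX, hXA, hA⟩ := exists_subset_pairwiseDisjoint_pair_add {x ∈ L | x + k ∈ L} k
  set I := {a ∈ A | Disjoint {a, a + k} (B \ F)}
  have hAI : #A ≤ #I + #(B \ F) := by
    have hsplit : #I + #{a ∈ A | ¬ Disjoint {a, a + k} (B \ F)} = #A :=
      card_filter_add_card_filter_not _
    have := card_filter_not_disjoint_le hA (B \ F)
    omega
  have hCM : ∀ a ∈ I, {a, a + k} \ F ⊆ L \ B := by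
    intro a ha
    obtain ⟨haA, hdisj⟩ := mem_filter.1 ha
    have hpair : {a, a + k} ⊆ L := by simpa [insert_subset_iff] using hAX haA
    intro y hy
    obtain ⟨hy, hyF⟩ := mem_sdiff.1 hy
    exact mem_sdiff.2 ⟨hpair hy, fun hyB => disjoint_left.1 hdisj hy (mem_sdiff.2 ⟨hyB, hyF⟩)⟩
  have hcount := card_filter_forall_not_subset_mul_four_pow_le (fun a => {a, a + k} \ F) I
    (L \ B) hCM (fun a _ => (card_le_card sdiff_subset).trans card_le_two)
    ((hA.subset (filter_subset _ _)).mono fun a => sdiff_subset)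
  have hexp : (#{x ∈ L | x + k ∈ L} : ℝ) / 2 - #(B \ F) ≤ #I := by
    have : (#{x ∈ L | x + k ∈ L} : ℝ) ≤ 2 * #A := by exact_mod_cast hXA
    have : (#A : ℝ) ≤ #I + #(B \ F) := by exact_mod_cast hAI
    linarith
  calc (#{S ∈ L.powerset | S ∩ B = F ∧ k ∉ S - S} : ℝ)
      ≤ #{t ∈ (L \ B).powerset | ∀ a ∈ I, ¬ {a, a + k} \ F ⊆ t} := by
        exact_mod_cast card_powerset_filter_sub_notMem_le_card_filter L B F I k
    _ ≤ (3 / 4 : ℝ) ^ #I * 2 ^ #(L \ B) := by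
      rw [div_pow, div_mul_eq_mul_div, le_div_iff₀ (by positivity)]
      exact_mod_cast hcount
    _ ≤ _ := by
      rw [← Real.rpow_natCast]
      gcongr ?_ * _
      exact Real.rpow_le_rpow_of_exponent_ge (by norm_num) (by norm_num) hexp

theorem Finset.card_powerset_filter_sub_notMem_div_le [IsAddTorsionFree G] {L B F : Finset G}
    (hBL : B ⊆ L) (hFB : F ⊆ B) (k : G) :
    (#{S ∈ L.powerset | S ∩ B = F ∧ k ∉ S - S} : ℝ) / #{S ∈ L.powerset | S ∩ B = F} ≤
      (3 / 4 : ℝ) ^ ((#{x ∈ L | x + k ∈ L} : ℝ) / 2 - #(B \ F)) := by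
  rw [card_powerset_filter_inter_eq hBL hFB, div_le_iff₀ (by positivity)]
  exact_mod_cast card_powerset_filter_sub_notMem_le L B F k

end AddGroup

section Lattice
variable {D : ℕ}

theorem latticePts_finite {S : Set (Pt D)} (hS : Bornology.IsBounded S) :
    (latticePts S).Finite := by
  obtain ⟨R, hR⟩ := hS.subset_closedBall 0
  let c : Fin D → ℤ := fun _ => ⌈R⌉
  refine ((Set.finite_Icc (-c) c).image fun z => WithLp.toLp 2 fun i => (z i : ℝ)).subset ?_
  rintro x ⟨hxS, hx⟩
  choose z hz using hx
  have hzR : ∀ i, |(z i : ℝ)| ≤ ⌈R⌉ := fun i => by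
    rw [← hz i]
    exact (PiLp.norm_apply_le x i).trans
      ((mem_closedBall_zero_iff.1 (hR hxS)).trans (Int.le_ceil R))
  refine ⟨z, ⟨fun i => ?_, fun i => ?_⟩, ?_⟩
  · exact_mod_cast (abs_le.1 (hzR i)).1
  · exact_mod_cast (abs_le.1 (hzR i)).2
  · ext i; exact (hz i).symm

theorem IsPolytope.isBounded {P : Set (Pt D)} (hP : IsPolytope P) : Bornology.IsBounded P := by
  obtain ⟨V, hV, rfl⟩ := hP
  exact isBounded_convexHull.2 hV.isBounded

theorem latticePts_inter_sub_singleton {Q : Set (Pt D)} {k : Pt D}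
    (hk : ∀ i, ∃ z : ℤ, k i = z) :
    latticePts (Q ∩ (Q - {k})) = {x | x ∈ latticePts Q ∧ x + k ∈ latticePts Q} := by
  have hadd : ∀ x : Pt D, (∀ i, ∃ z : ℤ, x i = z) → ∀ i, ∃ z : ℤ, (x + k) i = z := by
    intro x hx i
    obtain ⟨a, ha⟩ := hx i
    obtain ⟨b, hb⟩ := hk i
    exact ⟨a + b, by simp [ha, hb]⟩
  ext x
  simp only [latticePts, Set.sub_singleton, Set.mem_inter_iff, Set.mem_image, Set.mem_ofPred_eq]
  constructor
  · rintro ⟨⟨hxQ, y, hy, rfl⟩, hint⟩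
    exact ⟨⟨hxQ, hint⟩, by simpa using hy, hadd _ hint⟩
  · rintro ⟨⟨hxQ, hint⟩, hxkQ, -⟩
    exact ⟨⟨hxQ, x + k, hxkQ, add_sub_cancel_right x k⟩, hint⟩

end Lattice

theorem stmt16_general {D : ℕ} (P : Set (Pt D)) (hP : IsLatticePolytope P)
    (n : ℕ) (r : ℝ) (F : Set (Pt D))
    (hF : F ⊆ ballFringe ((n : ℝ) • P) r) (l : ℕ)
    (hl : (ballFringe ((n : ℝ) • P) r \ F).ncard = l)
    (k : Pt D) (hk : k ∈ middlePts ((n : ℝ) • P - (n : ℝ) • P) r) :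
    (({S : Set (Pt D) | S ⊆ latticePts ((n : ℝ) • P) ∧
        S ∩ ballFringe ((n : ℝ) • P) r = F ∧ k ∉ S - S}).ncard : ℝ) /
      (({S : Set (Pt D) | S ⊆ latticePts ((n : ℝ) • P) ∧
        S ∩ ballFringe ((n : ℝ) • P) r = F}).ncard : ℝ) ≤
      ((3 : ℝ) / 4) ^
        (((latticePts ((n : ℝ) • P ∩ ((n : ℝ) • P - ({k} : Set (Pt D))))).ncard : ℝ) / 2
          - (l : ℝ)) := by
  classical
  have : IsAddTorsionFree (Pt D) := .of_isTorsionFree ℝ (Pt D)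
  set Q := (n : ℝ) • P
  have hLfin : (latticePts Q).Finite := latticePts_finite (hP.1.isBounded.smul₀ _)
  obtain ⟨L, hL⟩ := hLfin.exists_finset_coe
  obtain ⟨B, hB⟩ := (hLfin.subset fun _ hq => hq.1 : (ballFringe Q r).Finite).exists_finset_coe
  have hBL : B ⊆ L := by
    rw [← coe_subset, hB, hL]
    exact fun _ hq => hq.1
  obtain ⟨F, rfl⟩ := (B.finite_toSet.subset (hB ▸ hF)).exists_finset_coe
  rw [← hB, coe_subset] at hF
  rw [← hB, ← coe_sdiff, Set.ncard_coe_finset] at hl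
  have hX : latticePts (Q ∩ (Q - {k})) = ↑{x ∈ L | x + k ∈ L} := by
    rw [latticePts_inter_sub_singleton hk.1.2, ← hL]
    ext; simp
  rw [hX, Set.ncard_coe_finset, ← hB, ← hL, ncard_setOf_subset_and, ncard_setOf_subset_and, ← hl]
  simp only [← coe_inter, coe_inj, ← coe_sub, mem_coe]
  exact card_powerset_filter_sub_notMem_div_le hBL hF k

/-- Fix a fringe set `F ⊆ B_r(nP)` missing exactly `l` points of
`B_r(nP)`, and let `k ∈ M_r(nP - nP)`. Among subsets `S ⊆ L(nP)` with
`S ∩ B_r(nP) = F`, the proportion of those with `k ∉ S - S` is at most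
`(3/4)^{|L(nP ∩ (nP - k))|/2 - l}`. -/
theorem stmt16 {D : ℕ} (P : Set (Pt D)) (hP : IsLatticePolytope P)
    (n : ℕ) (r : ℝ) (hr : 0 < r) (F : Set (Pt D))
    (hF : F ⊆ ballFringe ((n : ℝ) • P) r) (l : ℕ)
    (hl : (ballFringe ((n : ℝ) • P) r \ F).ncard = l)
    (k : Pt D) (hk : k ∈ middlePts ((n : ℝ) • P - (n : ℝ) • P) r) :
    (({S : Set (Pt D) | S ⊆ latticePts ((n : ℝ) • P) ∧
        S ∩ ballFringe ((n : ℝ) • P) r = F ∧ k ∉ S - S}).ncard : ℝ) /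
      (({S : Set (Pt D) | S ⊆ latticePts ((n : ℝ) • P) ∧
        S ∩ ballFringe ((n : ℝ) • P) r = F}).ncard : ℝ) ≤
      ((3 : ℝ) / 4) ^
        (((latticePts ((n : ℝ) • P ∩ ((n : ℝ) • P - ({k} : Set (Pt D))))).ncard : ℝ) / 2
          - (l : ℝ)) :=
  stmt16_general P hP n r F hF l hl k hk
end
end

section
/- Let Q be a 2-dimensional convex polytope (convex polygon) in ℝ² with m vertices. Then Q is locally point symmetric if and only if the sides (edges) of Q can be grouped into exactly m/2 pairs of parallel sides. -/
open scoped Pointwise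

noncomputable section

/-!
Call vertices `u`, `v` of a polytope opposite when `feasibleCone Q u = -feasibleCone Q v`, where
`feasibleCone Q v = C(v) - v`. Local point symmetry is exactly a fixed-point-free involution of
the vertices by opposite vertices: pointedness of the cones at vertices makes the opposite vertex
unique and distinct, and the strictly exposing functional at `u` strictly exposes `v` from below.
By Hahn–Banach (feasible cones of polytopes at vertices are closed and convex), `u` and `v` are
opposite iff the normal cones are opposite: a functional is maximized at `u` iff it is minimized
at `v`.

In a polygon with opposite vertices, the face `{f = min}` opposite to an edge `{f = max}` contains
the reflected edge direction at the opposite vertex of an endpoint, so it is a parallel edge.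
Conversely, if the edges come in parallel pairs, no linear functional is maximized at a single
point and minimized along an edge, since the partner edge would be the face of `±f`. So for `g` in
the open convex strict normal cone at `u` the minimizing vertex is unique; it is locally constant,
hence a single vertex `v`, and passing to the closure every functional maximized at `u` is
minimized at `v`.
-/

open Set

section Cone

variable {E : Type*} [AddCommGroup E] [Module ℝ E] {Q : Set E} {u v w x : E}

def feasibleCone (Q : Set E) (v : E) : Set E :=
  {x | ∃ l : ℝ, 0 ≤ l ∧ ∃ q ∈ Q, x = l • (q - v)}

lemma sub_mem_feasibleCone {q : E} (hq : q ∈ Q) : q - v ∈ feasibleCone Q v :=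
  ⟨1, zero_le_one, q, hq, (one_smul ℝ _).symm⟩

lemma smul_mem_feasibleCone {c : ℝ} (hc : 0 ≤ c) (hx : x ∈ feasibleCone Q v) :
    c • x ∈ feasibleCone Q v := by
  obtain ⟨l, hl, q, hq, rfl⟩ := hx
  exact ⟨c * l, mul_nonneg hc hl, q, hq, (mul_smul c l _).symm⟩

lemma zero_mem_feasibleCone (hQ : Q.Nonempty) : (0 : E) ∈ feasibleCone Q v := by
  obtain ⟨q, hq⟩ := hQ
  simpa using smul_mem_feasibleCone le_rfl (sub_mem_feasibleCone (v := v) hq)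

lemma eq_zero_of_mem_feasibleCone_of_neg_mem (hv : v ∈ extremePoints ℝ Q)
    (hx : x ∈ feasibleCone Q v) (hx' : -x ∈ feasibleCone Q v) : x = 0 := by
  obtain ⟨l, hl, q, hq, rfl⟩ := hx
  obtain ⟨l', hl', q', hq', he⟩ := hx'
  rcases hl.eq_or_lt with rfl | hl
  · exact zero_smul ℝ _
  rcases hl'.eq_or_lt with rfl | hl'
  · simpa using he
  suffices q = v by rw [this, sub_self, smul_zero]
  refine hv.2 hq hq' (mem_openSegment_iff_div.2 ⟨l, l', hl, hl', ?_⟩)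
  have hsum : l • q + l' • q' = (l + l') • v := by
    linear_combination (norm := module) -he
  rw [div_eq_inv_mul, div_eq_inv_mul, mul_smul, mul_smul, ← smul_add, hsum, smul_smul,
    inv_mul_cancel₀ (by positivity), one_smul]

lemma eq_of_feasibleCone_eq (hu : u ∈ extremePoints ℝ Q) (hw : w ∈ extremePoints ℝ Q)
    (h : feasibleCone Q u = feasibleCone Q w) : u = w := by
  have h₁ : w - u ∈ feasibleCone Q w := h ▸ sub_mem_feasibleCone hw.1
  have h₂ : -(w - u) ∈ feasibleCone Q w := by
    simpa using sub_mem_feasibleCone (v := w) hu.1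
  exact (sub_eq_zero.1 (eq_zero_of_mem_feasibleCone_of_neg_mem hw h₁ h₂)).symm

lemma convex_feasibleCone (hQ : Convex ℝ Q) (v : E) : Convex ℝ (feasibleCone Q v) := by
  rintro _ ⟨l, hl, p, hp, rfl⟩ _ ⟨l', hl', p', hp', rfl⟩ a b ha hb -
  rcases (add_nonneg (mul_nonneg ha hl) (mul_nonneg hb hl')).eq_or_lt with hL | hL
  · have h₁ : a * l = 0 := by nlinarith [mul_nonneg ha hl, mul_nonneg hb hl']
    have h₂ : b * l' = 0 := by nlinarith [mul_nonneg ha hl, mul_nonneg hb hl']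
    simpa [smul_smul, h₁, h₂] using smul_mem_feasibleCone le_rfl (sub_mem_feasibleCone (v := v) hp)
  · set L := a * l + b * l'
    have hz : (a * l / L) • p + (b * l' / L) • p' ∈ Q :=
      hQ hp hp' (by positivity) (by positivity) (by rw [← add_div, div_self hL.ne'])
    have hL' : ∀ (c : ℝ) (z : E), L • ((c / L) • z) = c • z := fun c z => by
      rw [smul_smul, mul_div_cancel₀ _ hL.ne']
    refine ⟨L, hL.le, _, hz, ?_⟩
    rw [smul_sub L, smul_add L, hL', hL']
    simp only [L]
    module

end Cone

section Face

variable {E : Type*} {Q : Set E} {u v x : E}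

def maxFace (Q : Set E) (f : E → ℝ) : Set E :=
  {x | x ∈ Q ∧ ∀ y ∈ Q, f y ≤ f x}

lemma maxFace_neg (f : E → ℝ) : maxFace Q (-f) = {x | x ∈ Q ∧ ∀ y ∈ Q, f x ≤ f y} := by
  simp [maxFace]

lemma maxFace_smul_of_pos (f : E → ℝ) {c : ℝ} (hc : 0 < c) : maxFace Q (c • f) = maxFace Q f := by
  simp [maxFace, mul_le_mul_iff_right₀ hc]

lemma maxFace_smul_of_neg (f : E → ℝ) {c : ℝ} (hc : c < 0) :
    maxFace Q (c • f) = maxFace Q (-f) := by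
  rw [← neg_neg c, neg_smul, ← smul_neg, maxFace_smul_of_pos _ (neg_pos.2 hc)]

lemma apply_eq_of_mem_maxFace {f : E → ℝ} {y : E} (hx : x ∈ maxFace Q f) (hy : y ∈ maxFace Q f) :
    f x = f y :=
  le_antisymm (hy.2 x hx.1) (hx.2 y hy.1)

lemma maxFace_eq_singleton {f : E → ℝ} (hu : u ∈ Q) (h : ∀ y ∈ Q, y ≠ u → f y < f u) :
    maxFace Q f = {u} := by
  refine eq_singleton_iff_unique_mem.2 ⟨⟨hu, fun y hy => ?_⟩, fun x hx => ?_⟩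
  · rcases eq_or_ne y u with rfl | hyu
    · exact le_rfl
    · exact (h y hy hyu).le
  · by_contra hxu
    exact (h x hx.1 hxu).not_ge (hx.2 u hu)

variable [AddCommGroup E] [Module ℝ E]

lemma apply_nonpos_of_mem_feasibleCone {f : E →ₗ[ℝ] ℝ} (hu : u ∈ maxFace Q f)
    (hx : x ∈ feasibleCone Q u) : f x ≤ 0 := by
  obtain ⟨l, hl, q, hq, rfl⟩ := hx
  simpa [map_smul, map_sub] using mul_nonpos_of_nonneg_of_nonpos hl (sub_nonpos.2 (hu.2 q hq))

lemma mem_maxFace_neg_of_feasibleCone_eq_neg (hK : feasibleCone Q u = -feasibleCone Q v)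
    (hv : v ∈ Q) {f : E →ₗ[ℝ] ℝ} (hu : u ∈ maxFace Q f) : v ∈ maxFace Q (-f) := by
  refine ⟨hv, fun q hq => ?_⟩
  have h : v - q ∈ feasibleCone Q u := by
    rw [hK, mem_neg, neg_sub]
    exact sub_mem_feasibleCone hq
  simpa [sub_nonpos] using apply_nonpos_of_mem_feasibleCone hu h

lemma nontrivial_maxFace_neg_of_feasibleCone_eq_neg (hK : feasibleCone Q u = -feasibleCone Q v)
    (hv : v ∈ Q) {f : E →ₗ[ℝ] ℝ} (hu : u ∈ maxFace Q f) (hf : (maxFace Q f).Nontrivial) :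
    (maxFace Q (-f)).Nontrivial := by
  have hvf := mem_maxFace_neg_of_feasibleCone_eq_neg hK hv hu
  obtain ⟨w, hw, hwu⟩ := hf.exists_ne u
  have h : u - w ∈ feasibleCone Q v := by
    rw [← neg_sub, ← mem_neg, ← hK]
    exact sub_mem_feasibleCone hw.1
  obtain ⟨l, hl, p, hp, hpe⟩ := h
  have hl : 0 < l := hl.lt_of_ne <| by
    rintro rfl
    exact hwu (sub_eq_zero.1 (by simpa using hpe)).symm
  have hfp : f p = f v := by
    have := congrArg f hpe
    simp only [map_sub, map_smul, smul_eq_mul, apply_eq_of_mem_maxFace hu hw, sub_self] at this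
    linarith [(mul_eq_zero.1 this.symm).resolve_left hl.ne']
  refine ⟨v, hvf, p, ⟨hp, fun y hy => ?_⟩, fun hpv => hwu ?_⟩
  · simpa [hfp] using hvf.2 y hy
  · exact (sub_eq_zero.1 (by simpa [← hpv] using hpe)).symm

end Face

section NormedCone

variable {E : Type*} [NormedAddCommGroup E] [NormedSpace ℝ E] {Q : Set E} {u v : E}

lemma isClosed_feasibleCone (hQ : IsCompact Q) (hv : v ∉ Q) : IsClosed (feasibleCone Q v) := by
  rcases Q.eq_empty_or_nonempty with rfl | hne
  · simp [feasibleCone]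
  obtain ⟨b₀, hb₀, hmin⟩ :=
    hQ.exists_isMinOn hne (continuous_norm.comp (continuous_sub_right v)).continuousOn
  have hδ : 0 < ‖b₀ - v‖ := norm_pos_iff.2 (sub_ne_zero.2 (ne_of_mem_of_not_mem hb₀ hv))
  refine isClosed_of_closure_subset fun x hx => ?_
  -- Near `x`, the scaling factor is bounded since the base stays `‖b₀ - v‖` away from `v`.
  set K := (fun p : ℝ × E => p.1 • (p.2 - v)) '' (Icc 0 ((‖x‖ + 1) / ‖b₀ - v‖) ×ˢ Q)
  have hK : IsCompact K := (isCompact_Icc.prod hQ).image (by fun_prop)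
  have hKsub : K ⊆ feasibleCone Q v := by
    rintro _ ⟨⟨l, b⟩, ⟨⟨hl, -⟩, hb⟩, rfl⟩
    exact ⟨l, hl, b, hb, rfl⟩
  suffices x ∈ closure K from hKsub (hK.isClosed.closure_subset this)
  rw [Metric.mem_closure_iff] at hx ⊢
  intro ε hε
  obtain ⟨_, ⟨l, hl, b, hb, rfl⟩, hxy⟩ := hx (min ε 1) (by positivity)
  refine ⟨_, ⟨(l, b), ⟨⟨hl, ?_⟩, hb⟩, rfl⟩, hxy.trans_le (min_le_left _ _)⟩
  rw [le_div_iff₀ hδ]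
  calc l * ‖b₀ - v‖ ≤ l * ‖b - v‖ := mul_le_mul_of_nonneg_left (hmin hb) hl
    _ = ‖l • (b - v)‖ := by rw [norm_smul, Real.norm_of_nonneg hl]
    _ ≤ ‖x‖ + 1 := norm_le_norm_add_const_of_dist_le
        (by rw [dist_comm]; exact hxy.le.trans (min_le_right _ _))

lemma neg_feasibleCone_subset (hv : v ∈ Q) (hc : IsClosed (feasibleCone Q v))
    (hconv : Convex ℝ (feasibleCone Q v))
    (h : ∀ g : StrongDual ℝ E, v ∈ maxFace Q g → u ∈ maxFace Q (-g)) :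
    -feasibleCone Q u ⊆ feasibleCone Q v := by
  rintro x ⟨l, hl, q, hq, hx⟩
  rw [← neg_neg x, hx, ← smul_neg, neg_sub]
  refine smul_mem_feasibleCone hl ?_
  -- A functional separating `u - q` from the cone is maximized at `v` but not minimized at `u`.
  by_contra hnot
  obtain ⟨g, s, hgs, hsg⟩ := geometric_hahn_banach_closed_point hconv hc hnot
  have hs : 0 < s := by simpa using hgs 0 (zero_mem_feasibleCone ⟨v, hv⟩)
  have hg : ∀ a ∈ feasibleCone Q v, g a ≤ 0 := by
    intro a ha
    by_contra! hpos
    have := hgs _ (smul_mem_feasibleCone (c := 2 * s / g a) (by positivity) ha)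
    rw [map_smul, smul_eq_mul, div_mul_cancel₀ _ hpos.ne'] at this
    linarith
  have hvg : v ∈ maxFace Q g :=
    ⟨hv, fun y hy => by simpa using hg _ (sub_mem_feasibleCone hy)⟩
  have hug := (h g hvg).2 q hq
  simp only [Pi.neg_apply, neg_le_neg_iff] at hug
  linarith [map_sub g u q]

end NormedCone

lemma IsPreconnected.subset_of_subset_biUnion {α ι : Type*} [TopologicalSpace α] {s : Set α}
    {t : Set ι} {U : ι → Set α} (hs : IsPreconnected s) (hU : ∀ i ∈ t, IsOpen (U i))
    (hdisj : t.PairwiseDisjoint U) (hst : s ⊆ ⋃ i ∈ t, U i) {i : ι} (hi : i ∈ t)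
    (hsi : (s ∩ U i).Nonempty) : s ⊆ U i := by
  refine hs.subset_left_of_subset_union (hU i hi)
    (isOpen_biUnion (s := t \ {i}) fun j hj => hU j hj.1)
    (disjoint_iUnion₂_right.2 fun j (hj : j ∈ t \ {i}) => hdisj hi hj.1 (Ne.symm hj.2))
    (fun x hx => ?_) hsi
  obtain ⟨j, hj, hxj⟩ := mem_iUnion₂.1 (hst hx)
  rcases eq_or_ne j i with rfl | hji
  · exact Or.inl hxj
  · exact Or.inr (mem_iUnion₂.2 ⟨j, ⟨hj, hji⟩, hxj⟩)

section StrictNormalCone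

variable {E : Type*} [NormedAddCommGroup E] [NormedSpace ℝ E] {V : Set E} {u v : E}

/-- For `V` the vertex set of a polytope, this is the interior of the normal cone at `u`. -/
def strictNormalCone (V : Set E) (u : E) : Set (StrongDual ℝ E) :=
  {g | ∀ q ∈ V, q ≠ u → g q < g u}

lemma isOpen_strictNormalCone (hV : V.Finite) (u : E) : IsOpen (strictNormalCone V u) := by
  have : strictNormalCone V u = ⋂ q ∈ V \ {u}, {g : StrongDual ℝ E | g q < g u} := by
    ext g
    simp [strictNormalCone]
  rw [this]
  exact hV.sdiff.isOpen_biInter fun q _ => isOpen_lt (by fun_prop) (by fun_prop)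

lemma convex_strictNormalCone (V : Set E) (u : E) : Convex ℝ (strictNormalCone V u) := by
  intro g hg g' hg' a b ha hb hab q hq hqu
  have h := hg q hq hqu
  have h' := hg' q hq hqu
  simp only [add_apply, smul_apply, smul_eq_mul]
  rcases ha.eq_or_lt with rfl | ha
  · simp only [zero_add] at hab
    simpa [hab] using h'
  · nlinarith [mul_lt_mul_of_pos_left h ha, mul_le_mul_of_nonneg_left h'.le hb]

lemma disjoint_strictNormalCone (hu : u ∈ V) (hv : v ∈ V) (huv : u ≠ v) :
    Disjoint (strictNormalCone V u) (strictNormalCone V v) :=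
  disjoint_left.2 fun _ hgu hgv => (hgu v hv huv.symm).asymm (hgv u hu huv)

end StrictNormalCone

section Polytope

variable {D : ℕ} {Q : Set (Pt D)} {u v : Pt D}

namespace IsPolytope

lemma convex (hQ : IsPolytope Q) : Convex ℝ Q := by
  obtain ⟨V, -, rfl⟩ := hQ
  exact convex_convexHull ℝ V

lemma isCompact (hQ : IsPolytope Q) : IsCompact Q := by
  obtain ⟨V, hV, rfl⟩ := hQ
  exact hV.isCompact_convexHull ℝ

lemma finite_extremePoints (hQ : IsPolytope Q) : (extremePoints ℝ Q).Finite := by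
  obtain ⟨V, hV, rfl⟩ := hQ
  exact hV.subset extremePoints_convexHull_subset

lemma convexHull_extremePoints (hQ : IsPolytope Q) : convexHull ℝ (extremePoints ℝ Q) = Q := by
  simpa [(hQ.finite_extremePoints.isClosed_convexHull ℝ).closure_eq] using
    closure_convexHull_extremePoints hQ.isCompact hQ.convex

lemma notMem_convexHull_extremePoints_sdiff (hQ : IsPolytope Q) (hu : u ∈ extremePoints ℝ Q) :
    u ∉ convexHull ℝ (extremePoints ℝ Q \ {u}) := fun h =>
  (convexHull_min (sdiff_subset_sdiff_left extremePoints_subset)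
    (hQ.convex.mem_extremePoints_iff_convex_sdiff.1 hu).2 h).2 rfl

lemma nonempty_extremePoints_sdiff (hQ : IsPolytope Q) (hQ' : Q.Nontrivial) (u : Pt D) :
    (extremePoints ℝ Q \ {u}).Nonempty := by
  by_contra h
  rw [not_nonempty_iff_eq_empty, sdiff_eq_empty] at h
  refine hQ'.not_subsingleton ((subsingleton_singleton (a := u)).anti ?_)
  rw [← hQ.convexHull_extremePoints]
  exact convexHull_min h (convex_singleton u)

lemma mem_maxFace_iff (hQ : IsPolytope Q) (f : Pt D →ₗ[ℝ] ℝ) (hu : u ∈ Q) :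
    u ∈ maxFace Q f ↔ ∀ q ∈ extremePoints ℝ Q, f q ≤ f u := by
  refine ⟨fun h q hq => h.2 q hq.1, fun h => ⟨hu, fun y hy => ?_⟩⟩
  rw [← hQ.convexHull_extremePoints] at hy
  exact convexHull_min h (convex_halfSpace_le f.isLinear (f u)) hy

lemma exists_extremePoint_mem_maxFace (hQ : IsPolytope Q) (hne : Q.Nonempty)
    (f : Pt D →ₗ[ℝ] ℝ) : ∃ z ∈ extremePoints ℝ Q, z ∈ maxFace Q f := by
  have hV : (extremePoints ℝ Q).Nonempty := by
    rw [← hQ.convexHull_extremePoints] at hne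
    exact convexHull_nonempty_iff.1 hne
  obtain ⟨z, hz, hmax⟩ := exists_max_image _ f hQ.finite_extremePoints hV
  exact ⟨z, hz, (hQ.mem_maxFace_iff f hz.1).2 hmax⟩

lemma feasibleCone_eq (hQ : IsPolytope Q) (hQ' : Q.Nontrivial) (hu : u ∈ extremePoints ℝ Q) :
    feasibleCone Q u = feasibleCone (convexHull ℝ (extremePoints ℝ Q \ {u})) u := by
  ext x
  constructor
  · rintro ⟨l, hl, y, hy, rfl⟩
    rw [← hQ.convexHull_extremePoints, ← insert_eq_of_mem hu, ← insert_sdiff_singleton,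
      convexHull_insert (hQ.nonempty_extremePoints_sdiff hQ' u), convexJoin_singleton_left]
      at hy
    obtain ⟨z, hz, hy⟩ := mem_iUnion₂.1 hy
    obtain ⟨t, ⟨ht, -⟩, rfl⟩ := segment_eq_image' ℝ u z ▸ hy
    exact ⟨l * t, mul_nonneg hl ht, z, hz, by rw [add_sub_cancel_left, smul_smul]⟩
  · rintro ⟨l, hl, z, hz, rfl⟩
    exact ⟨l, hl, z, convexHull_min (sdiff_subset.trans extremePoints_subset) hQ.convex hz, rfl⟩

lemma isClosed_feasibleCone (hQ : IsPolytope Q) (hQ' : Q.Nontrivial)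
    (hu : u ∈ extremePoints ℝ Q) : IsClosed (feasibleCone Q u) := by
  rw [hQ.feasibleCone_eq hQ' hu]
  exact _root_.isClosed_feasibleCone (hQ.finite_extremePoints.sdiff.isCompact_convexHull ℝ)
    (hQ.notMem_convexHull_extremePoints_sdiff hu)

lemma forall_lt_of_forall_extremePoints_lt (hQ : IsPolytope Q) (hQ' : Q.Nontrivial)
    (hu : u ∈ extremePoints ℝ Q) {f : Pt D →ₗ[ℝ] ℝ}
    (h : ∀ q ∈ extremePoints ℝ Q, q ≠ u → f q < f u) : ∀ y ∈ Q, y ≠ u → f y < f u := by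
  intro y hy hyu
  obtain ⟨l, hl, z, hz, hyz⟩ : y - u ∈ feasibleCone (convexHull ℝ (extremePoints ℝ Q \ {u})) u :=
    hQ.feasibleCone_eq hQ' hu ▸ sub_mem_feasibleCone hy
  have hfz : f z < f u :=
    convexHull_min (fun q hq => h q hq.1 hq.2) (convex_halfSpace_lt f.isLinear (f u)) hz
  have hl : 0 < l := hl.lt_of_ne <| by
    rintro rfl
    exact hyu (sub_eq_zero.1 (by simpa using hyz))
  have := congrArg f hyz
  rw [map_sub, map_smul, map_sub, smul_eq_mul] at this
  nlinarith

lemma strictNormalCone_nonempty (hQ : IsPolytope Q) (hu : u ∈ extremePoints ℝ Q) :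
    (strictNormalCone (extremePoints ℝ Q) u).Nonempty := by
  obtain ⟨g, s, hg, hs⟩ := geometric_hahn_banach_closed_point (convex_convexHull ℝ _)
    (hQ.finite_extremePoints.sdiff.isClosed_convexHull ℝ)
    (hQ.notMem_convexHull_extremePoints_sdiff hu)
  exact ⟨g, fun q hq hqu => (hg q (subset_convexHull ℝ _ ⟨hq, hqu⟩)).trans hs⟩

/-- A functional maximized at `u` is a limit of functionals in the strict normal cone at `u`;
these are minimized (strictly) at `v`, so it is minimized at `v` as well. -/
lemma mem_maxFace_neg_of_strictNormalCone_subset (hQ : IsPolytope Q) (hv : v ∈ Q)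
    {g₀ : StrongDual ℝ (Pt D)} (hg₀ : g₀ ∈ strictNormalCone (extremePoints ℝ Q) u)
    (hsub : strictNormalCone (extremePoints ℝ Q) u ⊆ -strictNormalCone (extremePoints ℝ Q) v)
    {g : StrongDual ℝ (Pt D)} (hg : u ∈ maxFace Q g) : v ∈ maxFace Q (-g) := by
  refine (hQ.mem_maxFace_iff (-(g : Pt D →ₗ[ℝ] ℝ)) hv).2 fun q hq => ?_
  simp only [LinearMap.neg_apply, ContinuousLinearMap.coe_coe, neg_le_neg_iff]
  rcases eq_or_ne q v with rfl | hqv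
  · exact le_rfl
  have key : ∀ t ∈ Ioi (0 : ℝ), g v + t * g₀ v ≤ g q + t * g₀ q := fun t ht => by
    have hmem : g + t • g₀ ∈ strictNormalCone (extremePoints ℝ Q) u := fun q' hq' hq'u => by
      simp only [add_apply, smul_apply, smul_eq_mul]
      nlinarith [hg.2 q' hq'.1, hg₀ q' hq' hq'u, mem_Ioi.1 ht]
    have := hsub hmem q hq hqv
    simp only [neg_apply, add_apply, smul_apply, smul_eq_mul] at this
    linarith
  have hclosed : IsClosed {t : ℝ | g v + t * g₀ v ≤ g q + t * g₀ q} :=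
    isClosed_le (by fun_prop) (by fun_prop)
  have h0 : (0 : ℝ) ∈ {t : ℝ | g v + t * g₀ v ≤ g q + t * g₀ q} :=
    hclosed.closure_subset_iff.2 key (by rw [closure_Ioi]; exact self_mem_Ici)
  simpa only [mem_ofPred_eq, zero_mul, add_zero] using h0

end IsPolytope

end Polytope

section SupportingCone

variable {D : ℕ} {Q : Set (Pt D)} {u v : Pt D}

lemma suppCone_eq_singleton_add (Q : Set (Pt D)) (v : Pt D) :
    suppCone Q v = {v} + feasibleCone Q v := by
  rw [suppCone]
  congr 1
  ext x
  simp only [mem_iUnion, Set.sub_singleton, mem_smul_set, mem_image, exists_prop]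
  constructor
  · rintro ⟨l, hl, _, ⟨q, hq, rfl⟩, rfl⟩
    exact ⟨l, hl, q, hq, rfl⟩
  · rintro ⟨l, hl, q, hq, rfl⟩
    exact ⟨l, hl, _, ⟨q, hq, rfl⟩, rfl⟩

lemma suppCone_sub_singleton (Q : Set (Pt D)) (v : Pt D) :
    suppCone Q v - {v} = feasibleCone Q v := by
  ext x
  simp only [suppCone_eq_singleton_add, Set.mem_sub, Set.mem_add, mem_singleton_iff]
  constructor
  · rintro ⟨_, ⟨_, rfl, k, hk, rfl⟩, _, rfl, rfl⟩
    simpa using hk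
  · exact fun hx => ⟨v + x, ⟨v, rfl, x, hx, rfl⟩, v, rfl, by abel⟩

lemma singleton_sub_suppCone (Q : Set (Pt D)) (v : Pt D) :
    {v} - suppCone Q v = -feasibleCone Q v := by
  ext x
  simp only [suppCone_eq_singleton_add, Set.mem_sub, Set.mem_add, mem_singleton_iff, mem_neg]
  constructor
  · rintro ⟨_, rfl, _, ⟨_, rfl, k, hk, rfl⟩, rfl⟩
    simpa using hk
  · exact fun hx => ⟨v, rfl, v + -x, ⟨v, rfl, -x, hx, rfl⟩, by abel⟩

lemma strictlyAntipodal_of_feasibleCone_eq_neg (hQ : IsPolytope Q) (hQ' : Q.Nontrivial)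
    (hu : u ∈ extremePoints ℝ Q) (hv : v ∈ Q) (hK : feasibleCone Q u = -feasibleCone Q v) :
    StrictlyAntipodal Q u v := by
  obtain ⟨g, hg⟩ := hQ.strictNormalCone_nonempty hu
  have hlt := hQ.forall_lt_of_forall_extremePoints_lt hQ' hu (f := g) hg
  have hmax : maxFace Q g = {u} := maxFace_eq_singleton hu.1 hlt
  have hg0 : (g : Pt D →ₗ[ℝ] ℝ) ≠ 0 := fun h0 => by
    obtain ⟨y, hy, hyu⟩ := hQ'.exists_ne u
    simpa [h0] using hlt y hy hyu
  have hum : u ∈ maxFace Q (g : Pt D →ₗ[ℝ] ℝ) := hmax ▸ rfl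
  refine ⟨g, hg0, hmax, ?_⟩
  rw [← maxFace_neg]
  have hvm := mem_maxFace_neg_of_feasibleCone_eq_neg hK hv hum
  refine Subsingleton.eq_singleton_of_mem (fun x hx y hy => ?_) hvm
  by_contra hxy
  have := nontrivial_maxFace_neg_of_feasibleCone_eq_neg (neg_eq_iff_eq_neg.1 hK.symm) hu.1
    (f := -(g : Pt D →ₗ[ℝ] ℝ)) hvm ⟨x, hx, y, hy, hxy⟩
  simp only [LinearMap.coe_neg, neg_neg, ContinuousLinearMap.coe_coe, hmax] at this
  exact not_nontrivial_singleton this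

theorem locallyPointSymmetric_iff (hQ : IsPolytope Q) (hQ' : Q.Nontrivial) :
    LocallyPointSymmetric Q ↔
      ∀ u ∈ extremePoints ℝ Q, ∃ v ∈ extremePoints ℝ Q, feasibleCone Q u = -feasibleCone Q v := by
  simp only [LocallyPointSymmetric, suppCone_sub_singleton, singleton_sub_suppCone]
  refine ⟨fun ⟨σ, hσ⟩ u hu => ⟨σ u, (hσ u hu).1, (hσ u hu).2.2.2.2⟩, fun h => ?_⟩
  choose! σ hσ hK using h
  refine ⟨σ, fun v hv => ⟨hσ v hv, fun heq => ?_, ?_,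
    strictlyAntipodal_of_feasibleCone_eq_neg hQ hQ' hv (hσ v hv).1 (hK v hv), hK v hv⟩⟩
  · obtain ⟨y, hy, hyv⟩ := hQ'.exists_ne v
    have hKv := hK v hv
    rw [heq] at hKv
    have h₁ : y - v ∈ feasibleCone Q v := sub_mem_feasibleCone hy
    have h₂ : -(y - v) ∈ feasibleCone Q v := by
      rw [← mem_neg, ← hKv]
      exact h₁
    exact hyv (sub_eq_zero.1 (eq_zero_of_mem_feasibleCone_of_neg_mem hv h₁ h₂))
  · refine eq_of_feasibleCone_eq (hσ _ (hσ v hv)) hv ?_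
    rw [hK v hv, ← neg_eq_iff_eq_neg.1 (hK _ (hσ v hv)).symm]

end SupportingCone

section LinearAlgebra

variable {E : Type*} [AddCommGroup E] [Module ℝ E] {S : Set E} {f g : E →ₗ[ℝ] ℝ}

lemma Set.Nontrivial.of_affineSpan_eq_top [Nontrivial E] (hS : affineSpan ℝ S = ⊤) :
    S.Nontrivial := by
  rw [← not_subsingleton_iff, ← vectorSpan_eq_bot_iff_subsingleton ℝ,
    AffineSubspace.vectorSpan_eq_top_of_affineSpan_eq_top ℝ E E hS]
  exact top_ne_bot

lemma vectorSpan_le_ker (h : ∀ x ∈ S, ∀ y ∈ S, f x = f y) : vectorSpan ℝ S ≤ LinearMap.ker f := by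
  rw [vectorSpan_def, Submodule.span_le]
  rintro _ ⟨x, hx, y, hy, rfl⟩
  simp [h x hx y hy]

lemma eq_zero_of_affineSpan_eq_top_of_forall_apply_eq (hS : affineSpan ℝ S = ⊤)
    (h : ∀ x ∈ S, ∀ y ∈ S, f x = f y) : f = 0 := by
  have := vectorSpan_le_ker h
  rwa [AffineSubspace.vectorSpan_eq_top_of_affineSpan_eq_top ℝ E E hS, top_le_iff,
    LinearMap.ker_eq_top] at this

lemma direction_affineSpan_eq_ker [FiniteDimensional ℝ E] (hE : Module.finrank ℝ E = 2)
    (hf : f ≠ 0) (hS : S.Nontrivial) (h : ∀ x ∈ S, ∀ y ∈ S, f x = f y) :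
    (affineSpan ℝ S).direction = LinearMap.ker f := by
  rw [direction_affineSpan]
  refine Submodule.eq_of_le_of_finrank_le (vectorSpan_le_ker h) ?_
  have hker := Module.Dual.finrank_ker_add_one_of_ne_zero hf
  have hspan : 1 ≤ Module.finrank ℝ (vectorSpan ℝ S) := by
    rw [Submodule.one_le_finrank_iff, Ne, vectorSpan_eq_bot_iff_subsingleton]
    exact hS.not_subsingleton
  omega

lemma exists_smul_eq_of_ker_le (h : LinearMap.ker f ≤ LinearMap.ker g) : ∃ c : ℝ, g = c • f := by
  have := mem_span_of_iInf_ker_le_ker (L := fun _ : Unit => f) (by simpa using h)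
  obtain ⟨c, hc⟩ := Submodule.mem_span_singleton.1 (by simpa using this)
  exact ⟨c, hc.symm⟩

lemma maxFace_ne_maxFace_neg (hS : affineSpan ℝ S = ⊤) (hf : f ≠ 0)
    (hne : (maxFace S f).Nonempty) : maxFace S f ≠ maxFace S (-f) := by
  obtain ⟨x, hx⟩ := hne
  intro h
  have hx' : x ∈ maxFace S (-f) := h ▸ hx
  refine hf (eq_zero_of_affineSpan_eq_top_of_forall_apply_eq hS fun y hy z hz => ?_)
  have := hx.2 y hy
  have := hx.2 z hz
  have := hx'.2 y hy
  have := hx'.2 z hz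
  simp only [Pi.neg_apply, neg_le_neg_iff] at *
  linarith

end LinearAlgebra

lemma IsEdge.nontrivial {D : ℕ} {Q E : Set (Pt D)} (h : IsEdge Q E) : E.Nontrivial := by
  rw [← not_subsingleton_iff]
  intro hs
  have := h.2
  rw [direction_affineSpan, (vectorSpan_eq_bot_iff_subsingleton ℝ).2 hs, finrank_bot] at this
  exact zero_ne_one this

def HasParallelEdgePairing {D : ℕ} (Q : Set (Pt D)) : Prop :=
  ∃ σ : Set (Pt D) → Set (Pt D), ∀ E : Set (Pt D), IsEdge Q E →
    IsEdge Q (σ E) ∧ σ E ≠ E ∧ σ (σ E) = E ∧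
    (affineSpan ℝ (σ E)).direction = (affineSpan ℝ E).direction

section Polygon

variable {Q : Set (Pt 2)} {u : Pt 2} {f g : Pt 2 →ₗ[ℝ] ℝ}

lemma direction_affineSpan_maxFace (hf : f ≠ 0) (h : (maxFace Q f).Nontrivial) :
    (affineSpan ℝ (maxFace Q f)).direction = LinearMap.ker f :=
  direction_affineSpan_eq_ker finrank_euclideanSpace_fin hf h fun _ hx _ hy =>
    apply_eq_of_mem_maxFace hx hy

lemma isEdge_maxFace (hf : f ≠ 0) (h : (maxFace Q f).Nontrivial) : IsEdge Q (maxFace Q f) := by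
  refine ⟨⟨f, hf, rfl⟩, ?_⟩
  have := Module.Dual.finrank_ker_add_one_of_ne_zero hf
  rw [finrank_euclideanSpace_fin] at this
  rw [direction_affineSpan_maxFace hf h]
  omega

lemma exists_smul_eq_of_parallel_maxFace (hf : f ≠ 0) (hg : g ≠ 0)
    (hfE : (maxFace Q f).Nontrivial) (hgE : (maxFace Q g).Nontrivial)
    (h : (affineSpan ℝ (maxFace Q f)).direction = (affineSpan ℝ (maxFace Q g)).direction) :
    ∃ c : ℝ, g = c • f :=
  exists_smul_eq_of_ker_le <| by
    rw [← direction_affineSpan_maxFace hf hfE, h, direction_affineSpan_maxFace hg hgE]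

lemma maxFace_neg_eq_of_maxFace_eq (hQ : affineSpan ℝ Q = ⊤) (hf : f ≠ 0) (hg : g ≠ 0)
    (hfE : (maxFace Q f).Nontrivial) (h : maxFace Q f = maxFace Q g) :
    maxFace Q (-f) = maxFace Q (-g) := by
  obtain ⟨c, rfl⟩ := exists_smul_eq_of_parallel_maxFace hf hg hfE (h ▸ hfE) (by rw [h])
  rcases lt_trichotomy c 0 with hc | rfl | hc
  · refine absurd ?_ (maxFace_ne_maxFace_neg hQ hf hfE.nonempty)
    rw [h, LinearMap.coe_smul, maxFace_smul_of_neg _ hc]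
  · simp at hg
  · rw [LinearMap.coe_smul, ← smul_neg, maxFace_smul_of_pos _ hc]

lemma subsingleton_maxFace_neg (hpair : HasParallelEdgePairing Q)
    (h : (maxFace Q f).Subsingleton) : (maxFace Q (-f)).Subsingleton := by
  rcases eq_or_ne f 0 with rfl | hf
  · simpa [← LinearMap.coe_neg] using h
  rw [← not_nontrivial_iff]
  intro hnt
  obtain ⟨σ, hσ⟩ := hpair
  have hE := isEdge_maxFace (neg_ne_zero.2 hf) (by simpa using hnt)
  obtain ⟨hσE, hne, -, hdir⟩ := hσ _ hE
  have hσnt := hσE.nontrivial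
  obtain ⟨⟨h', hh', hh'E⟩, -⟩ := hσE
  change σ _ = maxFace Q h' at hh'E
  rw [hh'E] at hne hdir hσnt
  obtain ⟨c, rfl⟩ := exists_smul_eq_of_parallel_maxFace (neg_ne_zero.2 hf) hh'
    (by simpa using hnt) hσnt hdir.symm
  rcases lt_trichotomy c 0 with hc | rfl | hc
  · rw [LinearMap.coe_smul, LinearMap.coe_neg, maxFace_smul_of_neg _ hc, neg_neg] at hσnt
    exact hσnt.not_subsingleton h
  · simp at hh'
  · exact hne (by rw [LinearMap.coe_smul, maxFace_smul_of_pos _ hc])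

theorem hasParallelEdgePairing_of_feasibleCone_eq_neg (hQ : IsPolytope Q)
    (hdim : affineSpan ℝ Q = ⊤)
    (h : ∀ u ∈ extremePoints ℝ Q, ∃ v ∈ extremePoints ℝ Q, feasibleCone Q u = -feasibleCone Q v) :
    HasParallelEdgePairing Q := by
  classical
  have hopp : ∀ f : Pt 2 →ₗ[ℝ] ℝ, (maxFace Q f).Nontrivial → (maxFace Q (-f)).Nontrivial := by
    intro f hE
    obtain ⟨u, hu, huE⟩ := hQ.exists_extremePoint_mem_maxFace (hE.nonempty.mono fun _ h => h.1) f
    obtain ⟨v, hv, hK⟩ := h u hu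
    exact nontrivial_maxFace_neg_of_feasibleCone_eq_neg hK hv.1 huE hE
  let σ : Set (Pt 2) → Set (Pt 2) := fun E =>
    if hE : IsEdge Q E then maxFace Q (-hE.1.choose) else E
  have hσ : ∀ f : Pt 2 →ₗ[ℝ] ℝ, f ≠ 0 → (maxFace Q f).Nontrivial →
      σ (maxFace Q f) = maxFace Q (-f) := by
    intro f hf hE
    have hE' := isEdge_maxFace hf hE
    obtain ⟨hf', hfeq⟩ := hE'.1.choose_spec
    simp only [σ, dif_pos hE']
    exact (maxFace_neg_eq_of_maxFace_eq hdim hf hf' hE hfeq).symm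
  refine ⟨σ, fun E hE => ?_⟩
  have hnt := hE.nontrivial
  obtain ⟨⟨f, hf, rfl⟩, -⟩ := hE
  change (maxFace Q f).Nontrivial at hnt
  change IsEdge Q (σ (maxFace Q f)) ∧ σ (maxFace Q f) ≠ maxFace Q f ∧
    σ (σ (maxFace Q f)) = maxFace Q f ∧
    (affineSpan ℝ (σ (maxFace Q f))).direction = (affineSpan ℝ (maxFace Q f)).direction
  have hnt' : (maxFace Q ⇑(-f)).Nontrivial := by simpa using hopp f hnt
  have hσσ := hσ (-f) (neg_ne_zero.2 hf) hnt'
  simp only [LinearMap.coe_neg, neg_neg] at hσσ hnt'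
  rw [hσ f hf hnt]
  refine ⟨by simpa using isEdge_maxFace (neg_ne_zero.2 hf) (by simpa using hnt'),
    (maxFace_ne_maxFace_neg hdim hf hnt.nonempty).symm, hσσ, ?_⟩
  rw [← LinearMap.coe_neg, direction_affineSpan_maxFace (neg_ne_zero.2 hf) (by simpa using hnt'),
    direction_affineSpan_maxFace hf hnt, LinearMap.ker_neg]

lemma exists_neg_mem_strictNormalCone (hQ : IsPolytope Q) (hQ' : Q.Nontrivial)
    (hpair : HasParallelEdgePairing Q) (hu : u ∈ extremePoints ℝ Q) {g : StrongDual ℝ (Pt 2)}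
    (hg : g ∈ strictNormalCone (extremePoints ℝ Q) u) :
    ∃ z ∈ extremePoints ℝ Q, -g ∈ strictNormalCone (extremePoints ℝ Q) z := by
  have hsub : (maxFace Q (-(g : Pt 2 →ₗ[ℝ] ℝ))).Subsingleton := subsingleton_maxFace_neg hpair <| by
    rw [ContinuousLinearMap.coe_coe,
      maxFace_eq_singleton (f := g) hu.1 (hQ.forall_lt_of_forall_extremePoints_lt hQ' hu hg)]
    exact subsingleton_singleton
  obtain ⟨z, hz, hzm⟩ := hQ.exists_extremePoint_mem_maxFace hQ'.nonempty (-(g : Pt 2 →ₗ[ℝ] ℝ))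
  rw [LinearMap.coe_neg] at hzm
  refine ⟨z, hz, fun q hq hqz => (hzm.2 q hq.1).lt_of_ne fun heq => hqz ?_⟩
  exact hsub ⟨hq.1, fun y hy => (hzm.2 y hy).trans_eq heq.symm⟩ hzm

lemma exists_strictNormalCone_subset_neg (hQ : IsPolytope Q) (hQ' : Q.Nontrivial)
    (hpair : HasParallelEdgePairing Q) (hu : u ∈ extremePoints ℝ Q) :
    ∃ v ∈ extremePoints ℝ Q,
      strictNormalCone (extremePoints ℝ Q) u ⊆ -strictNormalCone (extremePoints ℝ Q) v := by
  obtain ⟨g₀, hg₀⟩ := hQ.strictNormalCone_nonempty hu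
  obtain ⟨v, hv, hv₀⟩ := exists_neg_mem_strictNormalCone hQ hQ' hpair hu hg₀
  exact ⟨v, hv, (convex_strictNormalCone _ u).isPreconnected.subset_of_subset_biUnion
    (U := fun z => -strictNormalCone (extremePoints ℝ Q) z)
    (fun z _ => (isOpen_strictNormalCone hQ.finite_extremePoints z).neg)
    (fun z hz z' hz' hzz' => (disjoint_strictNormalCone hz hz' hzz').preimage _)
    (fun g hg => by
      obtain ⟨z, hz, hgz⟩ := exists_neg_mem_strictNormalCone hQ hQ' hpair hu hg
      exact mem_iUnion₂.2 ⟨z, hz, hgz⟩) hv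
    ⟨g₀, hg₀, hv₀⟩⟩

lemma exists_feasibleCone_eq_neg (hQ : IsPolytope Q) (hQ' : Q.Nontrivial)
    (hpair : HasParallelEdgePairing Q) (hu : u ∈ extremePoints ℝ Q) :
    ∃ v ∈ extremePoints ℝ Q, feasibleCone Q u = -feasibleCone Q v := by
  obtain ⟨g₀, hg₀⟩ := hQ.strictNormalCone_nonempty hu
  obtain ⟨v, hv, huv⟩ := exists_strictNormalCone_subset_neg hQ hQ' hpair hu
  obtain ⟨w, hw, hvw⟩ := exists_strictNormalCone_subset_neg hQ hQ' hpair hv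
  have hwu : w = u := by
    by_contra hwu
    refine disjoint_left.1 (disjoint_strictNormalCone hw hu hwu) ?_ hg₀
    simpa using hvw (huv hg₀)
  rw [hwu] at hvw
  refine ⟨v, hv, subset_antisymm (neg_subset.1 ?_) ?_⟩
  · exact neg_feasibleCone_subset hv.1 (hQ.isClosed_feasibleCone hQ' hv)
      (convex_feasibleCone hQ.convex v)
      fun g hg => hQ.mem_maxFace_neg_of_strictNormalCone_subset hu.1 (huv hg₀) hvw hg
  · exact neg_feasibleCone_subset hu.1 (hQ.isClosed_feasibleCone hQ' hu)
      (convex_feasibleCone hQ.convex u)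
      fun g hg => hQ.mem_maxFace_neg_of_strictNormalCone_subset hv.1 hg₀ huv hg

end Polygon

theorem stmt19_general (Q : Set (Pt 2)) (hQ : IsPolytope Q)
    (hdim : affineSpan ℝ Q = ⊤) :
    LocallyPointSymmetric Q ↔
      ∃ σ : Set (Pt 2) → Set (Pt 2), ∀ E : Set (Pt 2), IsEdge Q E →
        IsEdge Q (σ E) ∧ σ E ≠ E ∧ σ (σ E) = E ∧
        (affineSpan ℝ (σ E)).direction = (affineSpan ℝ E).direction := by
  have hQ' : Q.Nontrivial := .of_affineSpan_eq_top hdim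
  rw [locallyPointSymmetric_iff hQ hQ']
  exact ⟨hasParallelEdgePairing_of_feasibleCone_eq_neg hQ hdim,
    fun hpair _ hu => exists_feasibleCone_eq_neg hQ hQ' hpair hu⟩

/-- A (full-dimensional) convex polygon `Q ⊆ ℝ²` with `m` vertices is
locally point symmetric if and only if its sides can be grouped into exactly `m/2` pairs
of parallel sides (i.e. there is a fixed-point-free involution pairing each side with a
distinct parallel side). -/
theorem stmt19 (Q : Set (Pt 2)) (hQ : IsPolytope Q)
    (hdim : affineSpan ℝ Q = ⊤) (m : ℕ) (hm : (Set.extremePoints ℝ Q).ncard = m) :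
    LocallyPointSymmetric Q ↔
      ∃ σ : Set (Pt 2) → Set (Pt 2), ∀ E : Set (Pt 2), IsEdge Q E →
        IsEdge Q (σ E) ∧ σ E ≠ E ∧ σ (σ E) = E ∧
        (affineSpan ℝ (σ E)).direction = (affineSpan ℝ E).direction :=
  stmt19_general Q hQ hdim
end
end
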